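/- arXiv:2306.01474 — 5 statements merged into one kernel-verified Lean document; each statement's English description precedes it below -/
import Mathlib

section
/- (Coordinate part of the equivariant feed-forward network, Lemma 2.) Let n ≥ 1, h : Fin n → ℝ^d, X : Fin n → ℝ³, and let φ_r : ℝ → ℝ^k and φ_x : ℝ^d × ℝ^d × ℝ^k → ℝ be arbitrary functions. Set h_c = (1/n) ∑ᵢ h i, and for each p set Δ_p = X p − centroid(X), r_p = φ_r(‖Δ_p‖² / (1 + ‖Δ_p‖²)), and X'(p) = X p + φ_x(h p, h_c, r_p) • Δ_p. Then X' is E(3)-equivariant: for any 3×3 real orthogonal matrix Q and t ∈ ℝ³, computing the update with coordinates fun i => Q (X i) + t (and the same h) yields at each p the point Q (X'(p)) + t. -/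
open scoped BigOperators
set_option maxHeartbeats 1000000

noncomputable def centroid {n : ℕ} (X : Fin n → EuclideanSpace ℝ (Fin 3)) :
    EuclideanSpace ℝ (Fin 3) :=
  (1 / (n : ℝ)) • ∑ i, X i

/-- Coordinate part of the equivariant feed-forward network:
`X'(p) = X p + φ_x(h p, h_c, r_p) • (X p - centroid X)` where
`r_p = φ_r(‖Δ_p‖² / (1 + ‖Δ_p‖²))` and `h_c` is the mean feature. -/
noncomputable def ffnCoord {n d k : ℕ}
    (h : Fin n → EuclideanSpace ℝ (Fin d))
    (X : Fin n → EuclideanSpace ℝ (Fin 3))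
    (φr : ℝ → EuclideanSpace ℝ (Fin k))
    (φx : EuclideanSpace ℝ (Fin d) × EuclideanSpace ℝ (Fin d) × EuclideanSpace ℝ (Fin k) → ℝ)
    (p : Fin n) : EuclideanSpace ℝ (Fin 3) :=
  X p +
    φx (h p, (1 / (n : ℝ)) • ∑ i, h i,
          φr (‖X p - centroid X‖ ^ 2 / (1 + ‖X p - centroid X‖ ^ 2))) •
      (X p - centroid X)

theorem ffnCoord_equivariant (n d k : ℕ) (hn : 1 ≤ n)
    (h : Fin n → EuclideanSpace ℝ (Fin d))
    (X : Fin n → EuclideanSpace ℝ (Fin 3))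
    (φr : ℝ → EuclideanSpace ℝ (Fin k))
    (φx : EuclideanSpace ℝ (Fin d) × EuclideanSpace ℝ (Fin d) × EuclideanSpace ℝ (Fin k) → ℝ)
    (Q : Matrix (Fin 3) (Fin 3) ℝ) (hQ : Q ∈ Matrix.orthogonalGroup (Fin 3) ℝ)
    (t : EuclideanSpace ℝ (Fin 3)) :
    ∀ p, ffnCoord h (fun i => Matrix.toEuclideanLin Q (X i) + t) φr φx p
      = Matrix.toEuclideanLin Q (ffnCoord h X φr φx p) + t := by
  intro p
  set L := Matrix.toEuclideanLin Q with hL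
  have hn0 : (n : ℝ) ≠ 0 := by positivity
  -- centroid transforms equivariantly
  have hcent : centroid (fun i => L (X i) + t) = L (centroid X) + t := by
    unfold centroid
    rw [Finset.sum_add_distrib, ← map_sum, smul_add, ← map_smul]
    congr 1
    rw [Finset.sum_const, Finset.card_univ, Fintype.card_fin, (Nat.cast_smul_eq_nsmul ℝ _ _).symm,
      smul_smul, one_div, inv_mul_cancel₀ hn0, one_smul]
  -- L composed with its adjoint is identity
  have hadj : ∀ v : EuclideanSpace ℝ (Fin 3), LinearMap.adjoint L (L v) = v := by
    intro v
    rw [hL, ← Matrix.toEuclideanLin_conjTranspose_eq_adjoint]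
    have h1 : Q.conjTranspose * Q = 1 := (Matrix.mem_orthogonalGroup_iff' (Fin 3) ℝ).mp hQ
    have : (Matrix.toEuclideanLin Q.conjTranspose).comp (Matrix.toEuclideanLin Q) =
        Matrix.toEuclideanLin (Q.conjTranspose * Q) := by
      apply LinearMap.ext
      intro w
      simp [Matrix.toEuclideanLin_apply, Matrix.mulVec_mulVec]
    have := congrFun (congrArg DFunLike.coe this) v
    simp only [LinearMap.comp_apply] at this
    rw [this, h1]
    simp [Matrix.toEuclideanLin_apply]
  have hnorm : ∀ v : EuclideanSpace ℝ (Fin 3), ‖L v‖ = ‖v‖ := by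
    intro v
    have : (inner ℝ (L v) (L v) : ℝ) = inner ℝ v v := by
      rw [← LinearMap.adjoint_inner_left, hadj]
    rw [← Real.sqrt_sq (norm_nonneg (L v)), ← Real.sqrt_sq (norm_nonneg v),
      ← real_inner_self_eq_norm_sq, ← real_inner_self_eq_norm_sq, this]
  have hdelta : (L (X p) + t) - centroid (fun i => L (X i) + t) = L (X p - centroid X) := by
    rw [hcent, map_sub]
    abel
  simp only [ffnCoord]
  rw [hdelta, hnorm (X p - centroid X), map_add, map_smul]
  abel
end

section
/- (Feature part of the equivariant feed-forward network, Lemma 2.) Let n ≥ 1, h : Fin n → ℝ^d, X : Fin n → ℝ³, and let φ_r : ℝ → ℝ^k and φ_h : ℝ^d × ℝ^d × ℝ^k → ℝ^d be arbitrary functions. Set h_c = (1/n) ∑ᵢ h i, Δ_p = X p − centroid(X), r_p = φ_r(‖Δ_p‖² / (1 + ‖Δ_p‖²)), and h'(p) = h p + φ_h(h p, h_c, r_p). Then h' is E(3)-invariant: for any 3×3 real orthogonal matrix Q and t ∈ ℝ³, computing the update with coordinates fun i => Q (X i) + t (and the same h) yields the same function h'. -/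
/-!
The centroid commutes with affine maps, so the relative positions `Δ_p` of the moved cloud are
the `Q Δ_p`; as `Q` is orthogonal their norms, hence the `r_p`, are unchanged, while `h` and `h_c`
do not involve the coordinates at all.
-/

open scoped BigOperators

/-- Feature part of the equivariant feed-forward network:
`h'(p) = h p + φ_h(h p, h_c, r_p)` where
`r_p = φ_r(‖Δ_p‖² / (1 + ‖Δ_p‖²))` and `h_c` is the mean feature. -/
noncomputable def ffnFeat {n d k : ℕ}
    (h : Fin n → EuclideanSpace ℝ (Fin d))
    (X : Fin n → EuclideanSpace ℝ (Fin 3))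
    (φr : ℝ → EuclideanSpace ℝ (Fin k))
    (φh : EuclideanSpace ℝ (Fin d) × EuclideanSpace ℝ (Fin d) × EuclideanSpace ℝ (Fin k) →
      EuclideanSpace ℝ (Fin d))
    (p : Fin n) : EuclideanSpace ℝ (Fin d) :=
  h p +
    φh (h p, (1 / (n : ℝ)) • ∑ i, h i,
        φr (‖X p - centroid X‖ ^ 2 / (1 + ‖X p - centroid X‖ ^ 2)))

-- `toEuclideanCLM` is a star-algebra isomorphism, so it carries unitary matrices to unitary
-- operators.
theorem Matrix.norm_toEuclideanLin_of_mem_unitaryGroup {𝕜 ι : Type*} [RCLike 𝕜] [Fintype ι]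
    [DecidableEq ι] {Q : Matrix ι ι 𝕜} (hQ : Q ∈ Matrix.unitaryGroup ι 𝕜)
    (x : EuclideanSpace 𝕜 ι) : ‖Matrix.toEuclideanLin Q x‖ = ‖x‖ := by
  rw [← coe_toEuclideanCLM_eq_toEuclideanLin]
  exact ContinuousLinearMap.norm_map_of_mem_unitary (Unitary.map_mem toEuclideanCLM hQ) x

theorem centroid_map_add {n : ℕ} [NeZero n]
    (A : EuclideanSpace ℝ (Fin 3) →ₗ[ℝ] EuclideanSpace ℝ (Fin 3))
    (X : Fin n → EuclideanSpace ℝ (Fin 3)) (t : EuclideanSpace ℝ (Fin 3)) :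
    centroid (fun i => A (X i) + t) = A (centroid X) + t := by
  have hn : (n : ℝ) ≠ 0 := Nat.cast_ne_zero.mpr (NeZero.ne n)
  simp only [centroid, Finset.sum_add_distrib, Finset.sum_const, Finset.card_univ,
    Fintype.card_fin, smul_add, map_smul, map_sum, ← Nat.cast_smul_eq_nsmul ℝ, smul_smul,
    one_div, inv_mul_cancel₀ hn, one_smul]

theorem norm_sub_centroid_of_mem_orthogonalGroup {n : ℕ} [NeZero n]
    {Q : Matrix (Fin 3) (Fin 3) ℝ} (hQ : Q ∈ Matrix.orthogonalGroup (Fin 3) ℝ)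
    (X : Fin n → EuclideanSpace ℝ (Fin 3)) (t : EuclideanSpace ℝ (Fin 3)) (p : Fin n) :
    ‖Matrix.toEuclideanLin Q (X p) + t - centroid (fun i => Matrix.toEuclideanLin Q (X i) + t)‖
      = ‖X p - centroid X‖ := by
  rw [centroid_map_add, add_sub_add_right_eq_sub, ← map_sub,
    Matrix.norm_toEuclideanLin_of_mem_unitaryGroup hQ]

theorem ffnFeat_invariant_general (n d k : ℕ)
    (h : Fin n → EuclideanSpace ℝ (Fin d))
    (X : Fin n → EuclideanSpace ℝ (Fin 3))
    (φr : ℝ → EuclideanSpace ℝ (Fin k))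
    (φh : EuclideanSpace ℝ (Fin d) × EuclideanSpace ℝ (Fin d) × EuclideanSpace ℝ (Fin k) →
      EuclideanSpace ℝ (Fin d))
    (Q : Matrix (Fin 3) (Fin 3) ℝ) (hQ : Q ∈ Matrix.orthogonalGroup (Fin 3) ℝ)
    (t : EuclideanSpace ℝ (Fin 3)) :
    ffnFeat h (fun i => Matrix.toEuclideanLin Q (X i) + t) φr φh
      = ffnFeat h X φr φh := by
  funext p
  have : NeZero n := ⟨p.pos.ne'⟩
  simp only [ffnFeat, norm_sub_centroid_of_mem_orthogonalGroup hQ]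

theorem ffnFeat_invariant (n d k : ℕ) (hn : 1 ≤ n)
    (h : Fin n → EuclideanSpace ℝ (Fin d))
    (X : Fin n → EuclideanSpace ℝ (Fin 3))
    (φr : ℝ → EuclideanSpace ℝ (Fin k))
    (φh : EuclideanSpace ℝ (Fin d) × EuclideanSpace ℝ (Fin d) × EuclideanSpace ℝ (Fin k) →
      EuclideanSpace ℝ (Fin d))
    (Q : Matrix (Fin 3) (Fin 3) ℝ) (hQ : Q ∈ Matrix.orthogonalGroup (Fin 3) ℝ)
    (t : EuclideanSpace ℝ (Fin 3)) :
    ffnFeat h (fun i => Matrix.toEuclideanLin Q (X i) + t) φr φh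
      = ffnFeat h X φr φh :=
  ffnFeat_invariant_general n d k h X φr φh Q hQ t
end

section
/- (Equivariant layer normalization, Lemma 3.) Let N ≥ 1, X : Fin N → ℝ³ with coordinate variance V(X) = (1/(3N)) ∑ᵢ ‖X i − centroid(X)‖² strictly positive, and let σ ∈ ℝ. Define the layer-normalized coordinates L(X)(i) = σ • (X i − centroid(X)) / √(V(X)) + centroid(X). Then L is E(3)-equivariant: for any 3×3 real orthogonal matrix Q and t ∈ ℝ³, L(fun i => Q (X i) + t)(i) = Q (L(X)(i)) + t for every i. -/
open scoped BigOperators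

/-- Coordinate variance `V(X) = (1/(3N)) ∑ᵢ ‖X i − centroid(X)‖²`. -/
noncomputable def varCoord {N : ℕ} (X : Fin N → EuclideanSpace ℝ (Fin 3)) : ℝ :=
  (1 / (3 * (N : ℝ))) * ∑ i, ‖X i - centroid X‖ ^ 2

/-- Equivariant layer normalization on coordinates:
`L(X)(i) = σ • (X i − centroid(X)) / √(V(X)) + centroid(X)`. -/
noncomputable def layerNormCoord {N : ℕ} (σ : ℝ)
    (X : Fin N → EuclideanSpace ℝ (Fin 3)) (i : Fin N) : EuclideanSpace ℝ (Fin 3) :=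
  (σ / Real.sqrt (varCoord X)) • (X i - centroid X) + centroid X

lemma norm_toEuclideanLin (Q : Matrix (Fin 3) (Fin 3) ℝ)
    (hQ : Q ∈ Matrix.orthogonalGroup (Fin 3) ℝ) (x : EuclideanSpace ℝ (Fin 3)) :
    ‖Matrix.toEuclideanLin Q x‖ = ‖x‖ := by
  have h1 : (star Q) * Q = 1 := hQ.1
  have key : Matrix.toEuclideanLin (star Q) (Matrix.toEuclideanLin Q x) = x := by
    have := congrArg (fun A => Matrix.toEuclideanLin A x) h1
    simpa [Matrix.toEuclideanLin_apply, Matrix.mulVec_mulVec] using this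
  have h2 : (inner ℝ (Matrix.toEuclideanLin Q x) (Matrix.toEuclideanLin Q x) : ℝ) = inner ℝ x x := by
    have hadj : LinearMap.adjoint (Matrix.toEuclideanLin Q) = Matrix.toEuclideanLin (star Q) := by
      rw [← Matrix.toEuclideanLin_conjTranspose_eq_adjoint]; rfl
    rw [← LinearMap.adjoint_inner_right, hadj, key]
  rw [real_inner_self_eq_norm_sq, real_inner_self_eq_norm_sq] at h2
  nlinarith [norm_nonneg (Matrix.toEuclideanLin Q x), norm_nonneg x]

theorem layerNormCoord_equivariant (N : ℕ) (hN : 1 ≤ N)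
    (X : Fin N → EuclideanSpace ℝ (Fin 3)) (hV : 0 < varCoord X) (σ : ℝ)
    (Q : Matrix (Fin 3) (Fin 3) ℝ) (hQ : Q ∈ Matrix.orthogonalGroup (Fin 3) ℝ)
    (t : EuclideanSpace ℝ (Fin 3)) :
    ∀ i, layerNormCoord σ (fun i => Matrix.toEuclideanLin Q (X i) + t) i
      = Matrix.toEuclideanLin Q (layerNormCoord σ X i) + t := by
  intro i
  set f := Matrix.toEuclideanLin Q with hf
  have hN0 : (N : ℝ) ≠ 0 := by positivity
  have hcent : centroid (fun i => f (X i) + t) = f (centroid X) + t := by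
    simp only [centroid, Finset.sum_add_distrib, Finset.sum_const, Finset.card_univ,
      Fintype.card_fin, smul_add, ← map_sum]
    rw [← map_smul]
    congr 1
    rw [← Nat.cast_smul_eq_nsmul ℝ, smul_smul]
    field_simp
    rw [one_smul]
  have hvar : varCoord (fun i => f (X i) + t) = varCoord X := by
    unfold varCoord
    congr 1
    apply Finset.sum_congr rfl
    intro j _
    rw [hcent]
    have : f (X j) + t - (f (centroid X) + t) = f (X j - centroid X) := by
      rw [map_sub]; abel
    rw [this, norm_toEuclideanLin Q hQ]
  unfold layerNormCoord
  rw [hcent, hvar]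
  have : f (X i) + t - (f (centroid X) + t) = f (X i - centroid X) := by
    rw [map_sub]; abel
  rw [this, ← map_smul, map_add, map_smul, map_sub]
  abel
end

section
/- (Lemma 1, coordinate part: E(3)-equivariance of the bilevel attention coordinate update.) In the bilevel attention setup, define the coordinate update x'ᵢ(p) = xᵢ(p) + ∑_{j∈J} β_j ∑_q α_j[p,q] · φ_X(R_j[p,q]) • (xᵢ(p) − x_j(q)). Then for any 3×3 real orthogonal matrix Q and t ∈ ℝ³, computing the update after replacing every coordinate x of every atom of every block by Q x + t yields at each p the point Q (x'ᵢ(p)) + t. -/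
open scoped BigOperators RealInnerProductSpace

/-- Atom-level correlation between block `i` and a neighbor block `j`:
`R[p,q] = (1/√d_r) ⟨W_Qᵀ hᵢ(p), W_Kᵀ h_j(q)⟩ + σ_D(‖xᵢ(p) − x_j(q)‖)`. -/
noncomputable def Rcorr {d dr ni nj : ℕ}
    (WQ WK : Matrix (Fin d) (Fin dr) ℝ) (σD : ℝ → ℝ)
    (hi : Fin ni → EuclideanSpace ℝ (Fin d)) (xi : Fin ni → EuclideanSpace ℝ (Fin 3))
    (hj : Fin nj → EuclideanSpace ℝ (Fin d)) (xj : Fin nj → EuclideanSpace ℝ (Fin 3))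
    (p : Fin ni) (q : Fin nj) : ℝ :=
  (1 / Real.sqrt dr) *
      ⟪Matrix.toEuclideanLin WQ.transpose (hi p),
        Matrix.toEuclideanLin WK.transpose (hj q)⟫
    + σD ‖xi p - xj q‖

/-- Atom-level cross attention `α[p,q] = exp(R[p,q]) / ∑_{q'} exp(R[p,q'])`. -/
noncomputable def alphaAtt {d dr ni nj : ℕ}
    (WQ WK : Matrix (Fin d) (Fin dr) ℝ) (σD : ℝ → ℝ)
    (hi : Fin ni → EuclideanSpace ℝ (Fin d)) (xi : Fin ni → EuclideanSpace ℝ (Fin 3))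
    (hj : Fin nj → EuclideanSpace ℝ (Fin d)) (xj : Fin nj → EuclideanSpace ℝ (Fin 3))
    (p : Fin ni) (q : Fin nj) : ℝ :=
  Real.exp (Rcorr WQ WK σD hi xi hj xj p q) /
    ∑ q' : Fin nj, Real.exp (Rcorr WQ WK σD hi xi hj xj p q')

/-- Block-level correlation `r_j = (1/(nᵢ n_j)) ∑_{p,q} R_j[p,q] + e_j`. -/
noncomputable def rBlock {d dr ni nj : ℕ}
    (WQ WK : Matrix (Fin d) (Fin dr) ℝ) (σD : ℝ → ℝ)
    (hi : Fin ni → EuclideanSpace ℝ (Fin d)) (xi : Fin ni → EuclideanSpace ℝ (Fin 3))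
    (hj : Fin nj → EuclideanSpace ℝ (Fin d)) (xj : Fin nj → EuclideanSpace ℝ (Fin 3))
    (ej : ℝ) : ℝ :=
  (1 / ((ni : ℝ) * (nj : ℝ))) *
      (∑ p : Fin ni, ∑ q : Fin nj, Rcorr WQ WK σD hi xi hj xj p q)
    + ej

/-- Block-level cross attention `β_j = exp(r_j) / ∑_{j'∈J} exp(r_{j'})`. -/
noncomputable def betaAtt {d dr ni : ℕ} {ι : Type*} [Fintype ι]
    (WQ WK : Matrix (Fin d) (Fin dr) ℝ) (σD : ℝ → ℝ)
    (hi : Fin ni → EuclideanSpace ℝ (Fin d)) (xi : Fin ni → EuclideanSpace ℝ (Fin 3))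
    (nb : ι → ℕ)
    (hb : ∀ j, Fin (nb j) → EuclideanSpace ℝ (Fin d))
    (xb : ∀ j, Fin (nb j) → EuclideanSpace ℝ (Fin 3))
    (e : ι → ℝ) (j : ι) : ℝ :=
  Real.exp (rBlock WQ WK σD hi xi (hb j) (xb j) (e j)) /
    ∑ j' : ι, Real.exp (rBlock WQ WK σD hi xi (hb j') (xb j') (e j'))

/-- Coordinate update of the bilevel attention module:
`x'ᵢ(p) = xᵢ(p) + ∑_{j∈J} β_j ∑_q α_j[p,q] · φ_X(R_j[p,q]) • (xᵢ(p) − x_j(q))`. -/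
noncomputable def coordUpdate {d dr ni : ℕ} {ι : Type*} [Fintype ι]
    (WQ WK : Matrix (Fin d) (Fin dr) ℝ) (σD : ℝ → ℝ) (φX : ℝ → ℝ)
    (hi : Fin ni → EuclideanSpace ℝ (Fin d)) (xi : Fin ni → EuclideanSpace ℝ (Fin 3))
    (nb : ι → ℕ)
    (hb : ∀ j, Fin (nb j) → EuclideanSpace ℝ (Fin d))
    (xb : ∀ j, Fin (nb j) → EuclideanSpace ℝ (Fin 3))
    (e : ι → ℝ) (p : Fin ni) : EuclideanSpace ℝ (Fin 3) :=
  xi p + ∑ j : ι, betaAtt WQ WK σD hi xi nb hb xb e j •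
    ∑ q : Fin (nb j),
      (alphaAtt WQ WK σD hi xi (hb j) (xb j) p q *
        φX (Rcorr WQ WK σD hi xi (hb j) (xb j) p q)) • (xi p - xb j q)

/-- Feature update of the bilevel attention module:
`h'ᵢ(p) = hᵢ(p) + ∑_{j∈J} β_j • φ_m(∑_q α_j[p,q] • (W_Vᵀ h_j(q)))`. -/
noncomputable def featUpdate {d dr dv ni : ℕ} {ι : Type*} [Fintype ι]
    (WQ WK : Matrix (Fin d) (Fin dr) ℝ) (WV : Matrix (Fin d) (Fin dv) ℝ)
    (σD : ℝ → ℝ) (φm : EuclideanSpace ℝ (Fin dv) → EuclideanSpace ℝ (Fin d))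
    (hi : Fin ni → EuclideanSpace ℝ (Fin d)) (xi : Fin ni → EuclideanSpace ℝ (Fin 3))
    (nb : ι → ℕ)
    (hb : ∀ j, Fin (nb j) → EuclideanSpace ℝ (Fin d))
    (xb : ∀ j, Fin (nb j) → EuclideanSpace ℝ (Fin 3))
    (e : ι → ℝ) (p : Fin ni) : EuclideanSpace ℝ (Fin d) :=
  hi p + ∑ j : ι, betaAtt WQ WK σD hi xi nb hb xb e j •
    φm (∑ q : Fin (nb j),
      alphaAtt WQ WK σD hi xi (hb j) (xb j) p q •
        Matrix.toEuclideanLin WV.transpose (hb j q))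

/-! Rigid motions preserve the distances `‖xᵢ(p) − x_j(q)‖`, the only way coordinates enter
`R_j`, so all of `R_j`, `α_j`, `r_j` and `β_j` are unchanged. The update adds to `xᵢ(p)` a linear
combination of difference vectors, which are moved by the linear part of the motion only, so it
commutes with every affine isometry, in particular with `x ↦ Q x + t`. -/

open Matrix in
theorem Matrix.norm_toEuclideanLin_of_mem_orthogonalGroup {n : Type*} [Fintype n]
    [DecidableEq n] {Q : Matrix n n ℝ} (hQ : Q ∈ orthogonalGroup n ℝ)
    (v : EuclideanSpace ℝ n) : ‖toEuclideanLin Q v‖ = ‖v‖ :=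
  (toEuclideanCLM (𝕜 := ℝ) Q).norm_map_of_mem_unitary (Unitary.map_mem toEuclideanCLM hQ) v

section IsometryInvariance

variable {d dr ni : ℕ} {ι : Type*} [Fintype ι]
  (WQ WK : Matrix (Fin d) (Fin dr) ℝ) (σD : ℝ → ℝ) (hi : Fin ni → EuclideanSpace ℝ (Fin d))
  (xi : Fin ni → EuclideanSpace ℝ (Fin 3))
  {f : EuclideanSpace ℝ (Fin 3) → EuclideanSpace ℝ (Fin 3)}

theorem Rcorr_comp_isometry (hf : Isometry f) {nj : ℕ} (hj : Fin nj → EuclideanSpace ℝ (Fin d))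
    (xj : Fin nj → EuclideanSpace ℝ (Fin 3)) :
    Rcorr WQ WK σD hi (fun p => f (xi p)) hj (fun q => f (xj q)) = Rcorr WQ WK σD hi xi hj xj := by
  ext p q
  simp only [Rcorr, ← dist_eq_norm, hf.dist_eq]

theorem alphaAtt_comp_isometry (hf : Isometry f) {nj : ℕ}
    (hj : Fin nj → EuclideanSpace ℝ (Fin d)) (xj : Fin nj → EuclideanSpace ℝ (Fin 3)) :
    alphaAtt WQ WK σD hi (fun p => f (xi p)) hj (fun q => f (xj q))
      = alphaAtt WQ WK σD hi xi hj xj := by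
  ext p q
  simp only [alphaAtt, Rcorr_comp_isometry WQ WK σD hi xi hf]

theorem rBlock_comp_isometry (hf : Isometry f) {nj : ℕ}
    (hj : Fin nj → EuclideanSpace ℝ (Fin d)) (xj : Fin nj → EuclideanSpace ℝ (Fin 3)) (ej : ℝ) :
    rBlock WQ WK σD hi (fun p => f (xi p)) hj (fun q => f (xj q)) ej
      = rBlock WQ WK σD hi xi hj xj ej := by
  simp only [rBlock, Rcorr_comp_isometry WQ WK σD hi xi hf]

variable (nb : ι → ℕ) (hb : ∀ j, Fin (nb j) → EuclideanSpace ℝ (Fin d))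
  (xb : ∀ j, Fin (nb j) → EuclideanSpace ℝ (Fin 3)) (e : ι → ℝ)

theorem betaAtt_comp_isometry (hf : Isometry f) :
    betaAtt WQ WK σD hi (fun p => f (xi p)) nb hb (fun j q => f (xb j q)) e
      = betaAtt WQ WK σD hi xi nb hb xb e := by
  ext j
  simp only [betaAtt, rBlock_comp_isometry WQ WK σD hi xi hf]

theorem coordUpdate_comp_affineIsometry (φX : ℝ → ℝ)
    (g : EuclideanSpace ℝ (Fin 3) →ᵃⁱ[ℝ] EuclideanSpace ℝ (Fin 3)) (p : Fin ni) :
    coordUpdate WQ WK σD φX hi (fun p => g (xi p)) nb hb (fun j q => g (xb j q)) e p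
      = g (coordUpdate WQ WK σD φX hi xi nb hb xb e p) := by
  have hsub : ∀ x y, g x - g y = g.linearIsometry (x - y) := fun x y => (g.map_vsub x y).symm
  have hadd : ∀ x v, g (x + v) = g x + g.linearIsometry v := fun x v => by
    rw [add_comm x, ← vadd_eq_add, g.map_vadd, vadd_eq_add, add_comm]
  simp only [coordUpdate, betaAtt_comp_isometry WQ WK σD hi xi nb hb xb e g.isometry,
    alphaAtt_comp_isometry WQ WK σD hi xi g.isometry, Rcorr_comp_isometry WQ WK σD hi xi g.isometry,
    hsub, ← map_smul, ← map_sum]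
  exact (hadd _ _).symm

end IsometryInvariance

theorem coordUpdate_E3_equivariant_general {d dr ni : ℕ} {ι : Type*} [Fintype ι]
    (nb : ι → ℕ)
    (WQ WK : Matrix (Fin d) (Fin dr) ℝ) (σD : ℝ → ℝ) (φX : ℝ → ℝ)
    (hi : Fin ni → EuclideanSpace ℝ (Fin d)) (xi : Fin ni → EuclideanSpace ℝ (Fin 3))
    (hb : ∀ j, Fin (nb j) → EuclideanSpace ℝ (Fin d))
    (xb : ∀ j, Fin (nb j) → EuclideanSpace ℝ (Fin 3))
    (e : ι → ℝ)
    (Q : Matrix (Fin 3) (Fin 3) ℝ) (hQ : Q ∈ Matrix.orthogonalGroup (Fin 3) ℝ)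
    (t : EuclideanSpace ℝ (Fin 3)) :
    ∀ p : Fin ni,
      coordUpdate WQ WK σD φX hi (fun p => Matrix.toEuclideanLin Q (xi p) + t)
          nb hb (fun j q => Matrix.toEuclideanLin Q (xb j q) + t) e p
        = Matrix.toEuclideanLin Q (coordUpdate WQ WK σD φX hi xi nb hb xb e p) + t := by
  let L : EuclideanSpace ℝ (Fin 3) →ₗᵢ[ℝ] EuclideanSpace ℝ (Fin 3) :=
    ⟨Matrix.toEuclideanLin Q, Matrix.norm_toEuclideanLin_of_mem_orthogonalGroup hQ⟩
  exact coordUpdate_comp_affineIsometry WQ WK σD hi xi nb hb xb e φX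
    ((AffineIsometryEquiv.vaddConst ℝ t).toAffineIsometry.comp L.toAffineIsometry)

theorem coordUpdate_E3_equivariant {d dr ni : ℕ} {ι : Type*} [Fintype ι] [Nonempty ι]
    (hni : 1 ≤ ni) (nb : ι → ℕ) (hnb : ∀ j, 1 ≤ nb j)
    (WQ WK : Matrix (Fin d) (Fin dr) ℝ) (σD : ℝ → ℝ) (φX : ℝ → ℝ)
    (hi : Fin ni → EuclideanSpace ℝ (Fin d)) (xi : Fin ni → EuclideanSpace ℝ (Fin 3))
    (hb : ∀ j, Fin (nb j) → EuclideanSpace ℝ (Fin d))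
    (xb : ∀ j, Fin (nb j) → EuclideanSpace ℝ (Fin 3))
    (e : ι → ℝ)
    (Q : Matrix (Fin 3) (Fin 3) ℝ) (hQ : Q ∈ Matrix.orthogonalGroup (Fin 3) ℝ)
    (t : EuclideanSpace ℝ (Fin 3)) :
    ∀ p : Fin ni,
      coordUpdate WQ WK σD φX hi (fun p => Matrix.toEuclideanLin Q (xi p) + t)
          nb hb (fun j q => Matrix.toEuclideanLin Q (xb j q) + t) e p
        = Matrix.toEuclideanLin Q (coordUpdate WQ WK σD φX hi xi nb hb xb e p) + t :=
  coordUpdate_E3_equivariant_general nb WQ WK σD φX hi xi hb xb e Q hQ t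
end

section
/- (Lemma 4, coordinate part: intra-block permutation equivariance of the bilevel attention coordinate update.) In the bilevel attention setup, define x'ᵢ(p) = xᵢ(p) + ∑_{j∈J} β_j ∑_q α_j[p,q] · φ_X(R_j[p,q]) • (xᵢ(p) − x_j(q)). Let τᵢ be a permutation of Fin nᵢ and, for each j ∈ J, let τ_j be a permutation of Fin n_j. Then the coordinate update computed from the permuted inputs hᵢ ∘ τᵢ, xᵢ ∘ τᵢ and h_j ∘ τ_j, x_j ∘ τ_j (for all j ∈ J, with the same e_j) equals x'ᵢ ∘ τᵢ. -/
open scoped BigOperators RealInnerProductSpace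

/-! The correlations `R` are computed atom by atom, so reindexing the atoms only reindexes `R`.
The only sums over atoms, the softmax normaliser of `α` and the block mean `r`, are invariant
under permutations; hence `β` is unchanged and the inner sum of the update over `q` is merely
reindexed by `τ_j`. -/

section Reindexing

variable {d dr : ℕ} (WQ WK : Matrix (Fin d) (Fin dr) ℝ) (σD : ℝ → ℝ)

theorem Rcorr_comp {ni nj m k : ℕ}
    (hi : Fin ni → EuclideanSpace ℝ (Fin d)) (xi : Fin ni → EuclideanSpace ℝ (Fin 3))
    (hj : Fin nj → EuclideanSpace ℝ (Fin d)) (xj : Fin nj → EuclideanSpace ℝ (Fin 3))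
    (σ : Fin m → Fin ni) (τ : Fin k → Fin nj) (p : Fin m) (q : Fin k) :
    Rcorr WQ WK σD (hi ∘ σ) (xi ∘ σ) (hj ∘ τ) (xj ∘ τ) p q
      = Rcorr WQ WK σD hi xi hj xj (σ p) (τ q) := rfl

theorem alphaAtt_comp_perm {ni nj m : ℕ}
    (hi : Fin ni → EuclideanSpace ℝ (Fin d)) (xi : Fin ni → EuclideanSpace ℝ (Fin 3))
    (hj : Fin nj → EuclideanSpace ℝ (Fin d)) (xj : Fin nj → EuclideanSpace ℝ (Fin 3))
    (σ : Fin m → Fin ni) (τ : Equiv.Perm (Fin nj)) (p : Fin m) (q : Fin nj) :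
    alphaAtt WQ WK σD (hi ∘ σ) (xi ∘ σ) (hj ∘ τ) (xj ∘ τ) p q
      = alphaAtt WQ WK σD hi xi hj xj (σ p) (τ q) := by
  unfold alphaAtt
  rw [Rcorr_comp]
  congr 1
  exact Fintype.sum_equiv τ _ _ fun q' =>
    congrArg Real.exp (Rcorr_comp WQ WK σD hi xi hj xj σ τ p q')

theorem rBlock_comp_perm {ni nj : ℕ}
    (hi : Fin ni → EuclideanSpace ℝ (Fin d)) (xi : Fin ni → EuclideanSpace ℝ (Fin 3))
    (hj : Fin nj → EuclideanSpace ℝ (Fin d)) (xj : Fin nj → EuclideanSpace ℝ (Fin 3))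
    (ej : ℝ) (σ : Equiv.Perm (Fin ni)) (τ : Equiv.Perm (Fin nj)) :
    rBlock WQ WK σD (hi ∘ σ) (xi ∘ σ) (hj ∘ τ) (xj ∘ τ) ej
      = rBlock WQ WK σD hi xi hj xj ej := by
  unfold rBlock
  congr 2
  exact Fintype.sum_equiv σ _ _ fun p =>
    Fintype.sum_equiv τ _ _ fun q => Rcorr_comp WQ WK σD hi xi hj xj σ τ p q

theorem betaAtt_comp_perm {ni : ℕ} {ι : Type*} [Fintype ι]
    (hi : Fin ni → EuclideanSpace ℝ (Fin d)) (xi : Fin ni → EuclideanSpace ℝ (Fin 3))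
    (nb : ι → ℕ) (hb : ∀ j, Fin (nb j) → EuclideanSpace ℝ (Fin d))
    (xb : ∀ j, Fin (nb j) → EuclideanSpace ℝ (Fin 3)) (e : ι → ℝ)
    (σ : Equiv.Perm (Fin ni)) (τ : ∀ j, Equiv.Perm (Fin (nb j))) (j : ι) :
    betaAtt WQ WK σD (hi ∘ σ) (xi ∘ σ) nb
        (fun j => hb j ∘ τ j) (fun j => xb j ∘ τ j) e j
      = betaAtt WQ WK σD hi xi nb hb xb e j := by
  simp only [betaAtt, rBlock_comp_perm]

end Reindexing

theorem coordUpdate_perm_equivariant_general {d dr ni : ℕ} {ι : Type*} [Fintype ι]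
    (nb : ι → ℕ)
    (WQ WK : Matrix (Fin d) (Fin dr) ℝ) (σD : ℝ → ℝ) (φX : ℝ → ℝ)
    (hi : Fin ni → EuclideanSpace ℝ (Fin d)) (xi : Fin ni → EuclideanSpace ℝ (Fin 3))
    (hb : ∀ j, Fin (nb j) → EuclideanSpace ℝ (Fin d))
    (xb : ∀ j, Fin (nb j) → EuclideanSpace ℝ (Fin 3))
    (e : ι → ℝ)
    (τi : Equiv.Perm (Fin ni)) (τb : ∀ j : ι, Equiv.Perm (Fin (nb j))) :
    coordUpdate WQ WK σD φX (hi ∘ τi) (xi ∘ τi)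
        nb (fun j => hb j ∘ τb j) (fun j => xb j ∘ τb j) e
      = (coordUpdate WQ WK σD φX hi xi nb hb xb e) ∘ τi := by
  funext p
  simp only [coordUpdate, Function.comp_apply, betaAtt_comp_perm]
  congr 1
  refine Finset.sum_congr rfl fun j _ => congrArg _ ?_
  exact Fintype.sum_equiv (τb j) _ _ fun q => by
    simp only [alphaAtt_comp_perm, Rcorr_comp]

theorem coordUpdate_perm_equivariant {d dr ni : ℕ} {ι : Type*} [Fintype ι] [Nonempty ι]
    (hni : 1 ≤ ni) (nb : ι → ℕ) (hnb : ∀ j, 1 ≤ nb j)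
    (WQ WK : Matrix (Fin d) (Fin dr) ℝ) (σD : ℝ → ℝ) (φX : ℝ → ℝ)
    (hi : Fin ni → EuclideanSpace ℝ (Fin d)) (xi : Fin ni → EuclideanSpace ℝ (Fin 3))
    (hb : ∀ j, Fin (nb j) → EuclideanSpace ℝ (Fin d))
    (xb : ∀ j, Fin (nb j) → EuclideanSpace ℝ (Fin 3))
    (e : ι → ℝ)
    (τi : Equiv.Perm (Fin ni)) (τb : ∀ j : ι, Equiv.Perm (Fin (nb j))) :
    coordUpdate WQ WK σD φX (hi ∘ τi) (xi ∘ τi)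
        nb (fun j => hb j ∘ τb j) (fun j => xb j ∘ τb j) e
      = (coordUpdate WQ WK σD φX hi xi nb hb xb e) ∘ τi :=
  coordUpdate_perm_equivariant_general nb WQ WK σD φX hi xi hb xb e τi τb
end
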